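/- arXiv:2007.03485 — 2 statements merged into one kernel-verified Lean document; each statement's English description precedes it below -/
import Mathlib

section
/- Let T ⊂ ℝ³ be a bounded open set of diameter h_T, star-shaped with respect to an interior point x_T, and let c be a vector-valued polynomial on T. If p := (x − x_T) × curl c on T, then ‖curl c‖_{L²(T)} ≤ 2 ‖curl p‖_{L²(T)}. -/
open MeasureTheory
open scoped RealInnerProductSpace

noncomputable section

abbrev E3 := EuclideanSpace ℝ (Fin 3)

/-- `i`-th partial derivative. -/
def pd (i : Fin 3) (f : E3 → ℝ) (x : E3) : ℝ := fderiv ℝ f x (EuclideanSpace.single i 1)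

/-- Gradient. -/
def vgrad (f : E3 → ℝ) (x : E3) : E3 := (WithLp.equiv 2 (Fin 3 → ℝ)).symm fun i => pd i f x

/-- Divergence. -/
def vdiv (f : E3 → E3) (x : E3) : ℝ := ∑ i, pd i (fun y => f y i) x

/-- Curl. -/
def vcurl (f : E3 → E3) (x : E3) : E3 := (WithLp.equiv 2 (Fin 3 → ℝ)).symm
  ![pd 1 (fun y => f y 2) x - pd 2 (fun y => f y 1) x,
    pd 2 (fun y => f y 0) x - pd 0 (fun y => f y 2) x,
    pd 0 (fun y => f y 1) x - pd 1 (fun y => f y 0) x]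

/-- Cross product in ℝ³. -/
def cross3 (a b : E3) : E3 := (WithLp.equiv 2 (Fin 3 → ℝ)).symm
  ![a 1 * b 2 - a 2 * b 1, a 2 * b 0 - a 0 * b 2, a 0 * b 1 - a 1 * b 0]

/-- Convective derivative `(A·∇)B`. -/
def dirDeriv (A B : E3 → E3) (x : E3) : E3 := (WithLp.equiv 2 (Fin 3 → ℝ)).symm
  fun i => ∑ j, A x j * pd j (fun y => B y i) x

/-- Scalar polynomial of total degree ≤ q. -/
def PolyS (q : ℕ) (f : E3 → ℝ) : Prop :=
  ∃ P : MvPolynomial (Fin 3) ℝ, P.totalDegree ≤ q ∧ ∀ x : E3, f x = MvPolynomial.eval (fun i => x i) P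

/-- Vector polynomial of total degree ≤ q (componentwise). -/
def PolyV (q : ℕ) (f : E3 → E3) : Prop := ∀ i : Fin 3, PolyS q (fun x => f x i)

open Set Module

/-!
With `w = curl c`, which is divergence free, and `a = x - x_T`, the identity
`curl (a × w) = a div w - w div a + (w·∇)a - (a·∇)w` gives `curl p = -2 w - (a·∇)w`, hence
`w · curl p = -2 |w|² - ½ a·∇|w|²`. The integration by parts of `a·∇|w|²` is replaced by a
dilation argument: for `F ≥ 0` and `0 < t ≤ 1`, star-shapedness puts the dilate
`x_T + t (T - x_T)` inside `T`, so `t³ ∫_T F(x_T + t (x - x_T)) dx = ∫_{x_T + t (T - x_T)} F`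
is maximal at `t = 1`, and its derivative there gives `∫_T a·∇F ≥ -3 ∫_T F`. Together, in
`L²(T)`, `½ ‖w‖² ≤ -∫_T w · curl p ≤ ¼ ‖w‖² + ‖curl p‖²`, the last step by `ab ≤ a²/4 + b²`.
-/

lemma inner_fderiv_eq_fderiv_norm_sq_div_two {E F : Type*} [NormedAddCommGroup E]
    [NormedSpace ℝ E] [NormedAddCommGroup F] [InnerProductSpace ℝ F] {w : E → F} {x : E}
    (hw : DifferentiableAt ℝ w x) (v : E) :
    ⟪w x, fderiv ℝ w x v⟫ = fderiv ℝ (fun y => ‖w y‖ ^ 2) x v / 2 := by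
  simp [hw.hasFDerivAt.norm_sq.fderiv]

lemma Continuous.integrableOn_of_isBounded {X F : Type*} [MetricSpace X] [ProperSpace X]
    [MeasurableSpace X] [OpensMeasurableSpace X] (μ : Measure X) [IsFiniteMeasureOnCompacts μ]
    [NormedAddCommGroup F] {f : X → F} (hf : Continuous f) {T : Set X}
    (hT : Bornology.IsBounded T) : IntegrableOn f T μ :=
  (hf.continuousOn.integrableOn_compact hT.isCompact_closure).mono_set subset_closure

lemma setIntegral_neg_inner_le {X F : Type*} [MetricSpace X] [ProperSpace X] [MeasurableSpace X]
    [OpensMeasurableSpace X] (μ : Measure X) [IsFiniteMeasureOnCompacts μ]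
    [NormedAddCommGroup F] [InnerProductSpace ℝ F] {T : Set X} (hT : Bornology.IsBounded T)
    {u v : X → F} (hu : Continuous u) (hv : Continuous v) :
    ∫ x in T, -⟪u x, v x⟫ ∂μ ≤ (∫ x in T, ‖u x‖ ^ 2 ∂μ) / 4 + ∫ x in T, ‖v x‖ ^ 2 ∂μ := by
  have hintegrable : ∀ {f : X → ℝ}, Continuous f → IntegrableOn f T μ :=
    fun hf => hf.integrableOn_of_isBounded μ hT
  have hu₂ : IntegrableOn (fun x => ‖u x‖ ^ 2) T μ := hintegrable (hu.norm.pow 2)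
  have hv₂ : IntegrableOn (fun x => ‖v x‖ ^ 2) T μ := hintegrable (hv.norm.pow 2)
  rw [← integral_div, ← integral_add (hu₂.div_const _) hv₂]
  refine integral_mono (hintegrable (hu.inner hv).neg) ((hu₂.div_const _).add hv₂) fun x => ?_
  nlinarith [neg_abs_le ⟪u x, v x⟫, abs_real_inner_le_norm (u x) (v x),
    sq_nonneg (‖u x‖ / 2 - ‖v x‖)]

section Dilation

variable {E : Type*} [NormedAddCommGroup E] [NormedSpace ℝ E] {x₀ : E} {T : Set E}

lemma StarConvex.homothety_image_subset (hT : StarConvex ℝ x₀ T) {t : ℝ} (ht₀ : 0 ≤ t)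
    (ht₁ : t ≤ 1) : AffineMap.homothety x₀ t '' T ⊆ T := by
  rintro - ⟨y, hy, rfl⟩
  simpa [AffineMap.homothety_apply, add_comm] using hT.add_smul_sub_mem hy ht₀ ht₁

variable [FiniteDimensional ℝ E] [MeasurableSpace E] [BorelSpace E] (μ : Measure E)
  [μ.IsAddHaarMeasure]

lemma setIntegral_comp_homothety {F : Type*} [NormedAddCommGroup F] [NormedSpace ℝ F]
    (f : E → F) (x₀ : E) {t : ℝ} (ht : t ≠ 0) (T : Set E) :
    ∫ x in T, f (AffineMap.homothety x₀ t x) ∂μ =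
      |(t ^ finrank ℝ E)⁻¹| • ∫ y in AffineMap.homothety x₀ t '' T, f y ∂μ := by
  let e : E ≃ᵐ E :=
    { toEquiv := (AffineEquiv.homothetyUnitsMulHom x₀ (Units.mk0 t ht)).toEquiv
      measurable_toFun := (AffineMap.homothety_continuous x₀ t).measurable
      measurable_invFun := (AffineMap.homothety_continuous x₀ t⁻¹).measurable }
  have hmap : μ.map e = ENNReal.ofReal |(t ^ finrank ℝ E)⁻¹| • μ := by
    ext s hs
    rw [e.map_apply, ← e.image_symm]
    exact (Measure.addHaar_image_homothety μ x₀ t⁻¹ s).trans (by simp [inv_pow])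
  calc ∫ x in T, f (AffineMap.homothety x₀ t x) ∂μ = ∫ x in e ⁻¹' (e '' T), f (e x) ∂μ := by
        rw [e.preimage_image]; rfl
    _ = ∫ y in e '' T, f y ∂μ.map e := (setIntegral_map_equiv e f _).symm
    _ = _ := by
        rw [hmap, Measure.restrict_smul, integral_smul_measure,
          ENNReal.toReal_ofReal (abs_nonneg _)]
        rfl

lemma StarConvex.pow_finrank_mul_setIntegral_comp_homothety_le (hT : StarConvex ℝ x₀ T)
    {f : E → ℝ} (hf : 0 ≤ f) (hfT : IntegrableOn f T μ) {t : ℝ} (ht₀ : 0 < t) (ht₁ : t ≤ 1) :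
    t ^ finrank ℝ E * ∫ x in T, f (AffineMap.homothety x₀ t x) ∂μ ≤ ∫ x in T, f x ∂μ := by
  rw [setIntegral_comp_homothety μ f x₀ ht₀.ne' T, abs_of_pos (by positivity), smul_eq_mul,
    mul_inv_cancel_left₀ (by positivity)]
  exact setIntegral_mono_set hfT (.of_forall hf)
    (hT.homothety_image_subset ht₀.le ht₁).eventuallyLE

lemma hasDerivAt_setIntegral_comp_homothety (hTb : Bornology.IsBounded T) {f : E → ℝ}
    (hf : ContDiff ℝ 1 f) (t₀ : ℝ) :
    HasDerivAt (fun t => ∫ x in T, f (AffineMap.homothety x₀ t x) ∂μ)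
      (∫ x in T, fderiv ℝ f (AffineMap.homothety x₀ t₀ x) (x - x₀) ∂μ) t₀ := by
  set g : ℝ × E → ℝ := fun q => fderiv ℝ f (AffineMap.homothety x₀ q.1 q.2) (q.2 - x₀)
  have hh : Continuous fun q : ℝ × E => AffineMap.homothety x₀ q.1 q.2 := by
    simp only [AffineMap.homothety_apply, vsub_eq_sub, vadd_eq_add]; fun_prop
  have hg : Continuous g :=
    (hf.continuous_fderiv one_ne_zero).comp hh |>.clm_apply (by fun_prop)
  obtain ⟨M, hM⟩ := (isCompact_closedBall t₀ 1 |>.prod hTb.isCompact_closure)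
    |>.exists_bound_of_continuousOn hg.continuousOn
  have hT_closure : ∀ᵐ x ∂μ.restrict T, x ∈ closure T :=
    ae_restrict_of_ae_restrict_of_subset subset_closure
      (ae_restrict_mem isClosed_closure.measurableSet)
  refine (hasDerivAt_integral_of_dominated_loc_of_deriv_le (μ := μ.restrict T)
    (F := fun t x => f (AffineMap.homothety x₀ t x)) (F' := fun t x => g (t, x))
    (bound := fun _ => M)
    (Metric.ball_mem_nhds t₀ one_pos) (.of_forall fun t => ?_) ?_ ?_ ?_ ?_ ?_).2
  · exact (hf.continuous.comp (AffineMap.homothety_continuous _ _)).aestronglyMeasurable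
  · exact (hf.continuous.comp (AffineMap.homothety_continuous _ _)).integrableOn_of_isBounded μ hTb
  · exact (hg.comp (Continuous.prodMk_right t₀)).aestronglyMeasurable
  · filter_upwards [hT_closure] with x hx t ht
    exact hM (t, x) ⟨Metric.ball_subset_closedBall ht, hx⟩
  · exact integrableOn_const hTb.measure_lt_top.ne
  · refine .of_forall fun x t _ => ?_
    have hline : HasDerivAt (fun s : ℝ => AffineMap.homothety x₀ s x) (x - x₀) t := by
      simpa [AffineMap.homothety_apply] using (hasDerivAt_id t).smul_const (x - x₀) |>.add_const x₀
    exact (hf.differentiable one_ne_zero _).hasFDerivAt.comp_hasDerivAt t hline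

theorem StarConvex.neg_finrank_mul_setIntegral_le_setIntegral_fderiv (hT : StarConvex ℝ x₀ T)
    (hTb : Bornology.IsBounded T) {f : E → ℝ} (hf : ContDiff ℝ 1 f) (hf₀ : 0 ≤ f) :
    -(finrank ℝ E : ℝ) * ∫ x in T, f x ∂μ ≤ ∫ x in T, fderiv ℝ f x (x - x₀) ∂μ := by
  set φ : ℝ → ℝ := fun t => ∫ x in T, f (AffineMap.homothety x₀ t x) ∂μ
  have hφ₁ : φ 1 = ∫ x in T, f x ∂μ := by simp [φ, AffineMap.homothety_one]
  have hderiv : HasDerivAt (fun t => t ^ finrank ℝ E * φ t)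
      (finrank ℝ E * ∫ x in T, f x ∂μ + ∫ x in T, fderiv ℝ f x (x - x₀) ∂μ) 1 := by
    have h := (hasDerivAt_pow (finrank ℝ E) (1 : ℝ)).mul
      (hasDerivAt_setIntegral_comp_homothety μ (x₀ := x₀) hTb hf 1)
    simp only [one_pow, mul_one, one_mul, AffineMap.homothety_one, AffineMap.id_apply] at h
    exact h
  have hmax : IsLocalMaxOn (fun t => t ^ finrank ℝ E * φ t) (Ioc 0 1) 1 :=
    eventually_mem_nhdsWithin.mono fun t ht => by
      simpa [hφ₁] using hT.pow_finrank_mul_setIntegral_comp_homothety_le μ hf₀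
        (hf.continuous.integrableOn_of_isBounded μ hTb) ht.1 ht.2
  have hsegment : segment ℝ 1 (1 + -1 / 2) ⊆ Ioc (0 : ℝ) 1 := by
    rw [segment_symm, segment_eq_Icc (by norm_num)]
    exact fun t ht => ⟨by linarith [ht.1], ht.2⟩
  have hnonpos := hmax.hasFDerivWithinAt_nonpos hderiv.hasDerivWithinAt.hasFDerivWithinAt
    (mem_posTangentConeAt_of_segment_subset hsegment)
  rw [ContinuousLinearMap.toSpanSingleton_apply, smul_eq_mul] at hnonpos
  linarith

end Dilation

section PartialDerivatives

variable {f g : E3 → ℝ} {x : E3}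

lemma pd_sub (i : Fin 3) (hf : DifferentiableAt ℝ f x) (hg : DifferentiableAt ℝ g x) :
    pd i (fun y => f y - g y) x = pd i f x - pd i g x := by
  rw [pd, fderiv_fun_sub hf hg]; rfl

lemma pd_mul (i : Fin 3) (hf : DifferentiableAt ℝ f x) (hg : DifferentiableAt ℝ g x) :
    pd i (fun y => f y * g y) x = pd i f x * g x + f x * pd i g x := by
  rw [pd, fderiv_fun_mul hf hg]
  simp only [add_apply, smul_apply, smul_eq_mul, pd]
  ring

lemma pd_coord_sub (a : E3) (i j : Fin 3) :
    pd j (fun y => y i - a i) x = if i = j then 1 else 0 := by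
  have : HasFDerivAt (fun y : E3 => y i - a i) (EuclideanSpace.proj (𝕜 := ℝ) i) x :=
    (EuclideanSpace.proj (𝕜 := ℝ) i).hasFDerivAt.sub_const _
  simp [pd, this.fderiv]

lemma fderiv_apply_eq_sum_pd (v : E3) : fderiv ℝ f x v = ∑ j, v j * pd j f x := by
  conv_lhs => rw [← (EuclideanSpace.basisFun (Fin 3) ℝ).sum_repr v]
  simp [pd, map_sum, map_smul]

lemma pd_pd_comm (hf : ContDiff ℝ 2 f) (i j : Fin 3) : pd i (pd j f) x = pd j (pd i f) x := by
  have hd : DifferentiableAt ℝ (fderiv ℝ f) x :=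
    (hf.fderiv_right (m := 1) le_rfl).differentiable one_ne_zero x
  unfold pd
  rw [fderiv_clm_apply hd (differentiableAt_const _),
    fderiv_clm_apply hd (differentiableAt_const _)]
  simpa using hf.contDiffAt.isSymmSndFDerivAt (x := x) (by simp) _ _

lemma ContDiff.pd {n : ℕ∞} (hf : ContDiff ℝ (n + 1) f) (i : Fin 3) : ContDiff ℝ n (pd i f) :=
  (hf.fderiv_right le_rfl).clm_apply contDiff_const

lemma PolyS.contDiff {q : ℕ} (hf : PolyS q f) {n : WithTop ℕ∞} : ContDiff ℝ n f := by
  obtain ⟨P, -, hP⟩ := hf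
  rw [funext hP]
  exact (AnalyticOnNhd.eval_continuousLinearMap'
    (fun i => EuclideanSpace.proj (𝕜 := ℝ) (ι := Fin 3) i) P).contDiff

end PartialDerivatives

section VectorCalculus

variable {c w : E3 → E3} {x : E3}

lemma PolyV.contDiff {q : ℕ} (hc : PolyV q c) {n : WithTop ℕ∞} : ContDiff ℝ n c :=
  (contDiff_piLp 2).2 fun i => (hc i).contDiff

lemma ContDiff.vcurl {n : ℕ∞} (hc : ContDiff ℝ (n + 1) c) : ContDiff ℝ n (vcurl c) := by
  have hci : ∀ i, ContDiff ℝ (n + 1) (fun y => c y i) := (contDiff_piLp 2).1 hc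
  refine (contDiff_piLp 2).2 fun i => ?_
  fin_cases i <;> simp only [_root_.vcurl, WithLp.equiv_symm_apply, WithLp.ofLp_toLp] <;>
    exact ((hci _).pd _).sub ((hci _).pd _)

lemma vdiv_vcurl (hc : ContDiff ℝ 2 c) (x : E3) : vdiv (vcurl c) x = 0 := by
  have hci : ∀ i, ContDiff ℝ 2 (fun y => c y i) := (contDiff_piLp 2).1 hc
  have hd : ∀ i j, DifferentiableAt ℝ (pd i fun y => c y j) x := fun i j =>
    ((hci j).pd (n := 1) i).differentiable one_ne_zero x
  simp only [vdiv, vcurl, WithLp.equiv_symm_apply, WithLp.ofLp_toLp, Fin.sum_univ_three,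
    Matrix.cons_val_zero, Matrix.cons_val_one, Matrix.cons_val_two, Matrix.head_cons,
    Matrix.tail_cons]
  rw [pd_sub _ (hd _ _) (hd _ _), pd_sub _ (hd _ _) (hd _ _), pd_sub _ (hd _ _) (hd _ _),
    pd_pd_comm (hci 0) 1 2, pd_pd_comm (hci 1) 0 2, pd_pd_comm (hci 2) 0 1]
  ring

lemma dirDeriv_eq_fderiv (hw : DifferentiableAt ℝ w x) (A : E3 → E3) :
    dirDeriv A w x = fderiv ℝ w x (A x) := by
  ext i
  have hi : HasFDerivAt (fun y => w y i)
      ((EuclideanSpace.proj (𝕜 := ℝ) i).comp (fderiv ℝ w x)) x :=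
    (EuclideanSpace.proj (𝕜 := ℝ) (ι := Fin 3) i).hasFDerivAt.comp x hw.hasFDerivAt
  simp [dirDeriv, ← fderiv_apply_eq_sum_pd, hi.fderiv]

lemma vcurl_cross_sub (hw : DifferentiableAt ℝ w x) (hdiv : vdiv w x = 0) (x₀ : E3) :
    vcurl (fun y => cross3 (y - x₀) (w y)) x = (-2 : ℝ) • w x - dirDeriv (fun y => y - x₀) w x := by
  have hwi : ∀ i, DifferentiableAt ℝ (fun y => w y i) x := fun i =>
    (EuclideanSpace.proj (𝕜 := ℝ) i).differentiableAt.comp x hw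
  have hai : ∀ i, DifferentiableAt ℝ (fun y : E3 => y i - x₀ i) x := fun i =>
    (EuclideanSpace.proj (𝕜 := ℝ) i).differentiableAt.sub_const _
  simp only [vdiv, Fin.sum_univ_three] at hdiv
  ext i
  fin_cases i <;>
    simp only [vcurl, cross3, dirDeriv, WithLp.equiv_symm_apply, PiLp.sub_apply, PiLp.neg_apply,
      PiLp.smul_apply, smul_eq_mul, neg_smul, Fin.sum_univ_three, Matrix.cons_val,
      Matrix.cons_val_zero, Matrix.cons_val_one, Fin.isValue, Fin.zero_eta, Fin.mk_one,
      Fin.reduceFinMk, Fin.reduceEq, zero_ne_one, one_ne_zero, ↓reduceIte, hai, hwi,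
      DifferentiableAt.fun_mul, pd_sub, pd_mul, pd_coord_sub, zero_mul, zero_add, one_mul]
  · linear_combination (x 0 - x₀ 0) * hdiv
  · linear_combination (x 1 - x₀ 1) * hdiv
  · linear_combination (x 2 - x₀ 2) * hdiv

lemma vcurl_cross_sub_vcurl (hc : ContDiff ℝ 2 c) (x₀ : E3) :
    vcurl (fun y => cross3 (y - x₀) (vcurl c y)) =
      fun x => (-2 : ℝ) • vcurl c x - fderiv ℝ (vcurl c) x (x - x₀) := by
  funext x
  have hw : DifferentiableAt ℝ (vcurl c) x := (hc.vcurl (n := 1)).differentiable one_ne_zero x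
  rw [vcurl_cross_sub hw (vdiv_vcurl hc x), dirDeriv_eq_fderiv hw]

lemma ContDiff.continuous_vcurl_cross_sub_vcurl (hc : ContDiff ℝ 2 c) (x₀ : E3) :
    Continuous (_root_.vcurl fun y => cross3 (y - x₀) (_root_.vcurl c y)) := by
  have hw : ContDiff ℝ 1 (_root_.vcurl c) := hc.vcurl (n := 1)
  rw [vcurl_cross_sub_vcurl hc]
  exact ((continuous_const (y := (-2 : ℝ))).smul hw.continuous).sub
    ((hw.continuous_fderiv one_ne_zero).clm_apply (continuous_id.sub continuous_const))

end VectorCalculus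

theorem StarConvex.setIntegral_norm_sq_vcurl_div_two_le {x₀ : E3} {T : Set E3}
    (hT : StarConvex ℝ x₀ T) (hTb : Bornology.IsBounded T) {c : E3 → E3} (hc : ContDiff ℝ 2 c) :
    (∫ x in T, ‖vcurl c x‖ ^ 2) / 2 ≤
      ∫ x in T, -⟪vcurl c x, vcurl (fun y => cross3 (y - x₀) (vcurl c y)) x⟫ := by
  have hw : ContDiff ℝ 1 (vcurl c) := hc.vcurl (n := 1)
  have hw₂ : ContDiff ℝ 1 (fun x => ‖vcurl c x‖ ^ 2) := hw.norm_sq ℝ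
  have hinner : ∀ x, ⟪vcurl c x, vcurl (fun y => cross3 (y - x₀) (vcurl c y)) x⟫ =
      -2 * ‖vcurl c x‖ ^ 2 - fderiv ℝ (fun y => ‖vcurl c y‖ ^ 2) x (x - x₀) / 2 := fun x => by
    rw [vcurl_cross_sub_vcurl hc, inner_sub_right, real_inner_smul_right,
      real_inner_self_eq_norm_sq, inner_fderiv_eq_fderiv_norm_sq_div_two
        (hw.differentiable one_ne_zero x)]
  have hdil := hT.neg_finrank_mul_setIntegral_le_setIntegral_fderiv volume hTb hw₂
    fun x => sq_nonneg _
  rw [finrank_euclideanSpace_fin, Nat.cast_ofNat] at hdil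
  rw [integral_neg, integral_congr_ae (.of_forall hinner), integral_sub, integral_const_mul,
    integral_div]
  · linarith
  · exact (hw₂.continuous.integrableOn_of_isBounded volume hTb).const_mul _
  · exact ((hw₂.continuous_fderiv one_ne_zero).clm_apply (continuous_id.sub continuous_const)
      |>.integrableOn_of_isBounded volume hTb).div_const _

theorem curl_L2_bound_star_shaped_general (T : Set E3) (xT : E3)
    (hbdd : Bornology.IsBounded T) (hstar : StarConvex ℝ xT T)
    (c : E3 → E3) (q : ℕ) (hc : PolyV q c)
    (p : E3 → E3) (hp : ∀ x, p x = cross3 (x - xT) (vcurl c x)) :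
    Real.sqrt (∫ x in T, ‖vcurl c x‖ ^ 2) ≤ 2 * Real.sqrt (∫ x in T, ‖vcurl p x‖ ^ 2) := by
  have hc₂ : ContDiff ℝ 2 c := hc.contDiff
  obtain rfl : p = fun x => cross3 (x - xT) (vcurl c x) := funext hp
  have hlower := hstar.setIntegral_norm_sq_vcurl_div_two_le hbdd hc₂
  have hupper := setIntegral_neg_inner_le volume hbdd (hc₂.vcurl (n := 1)).continuous
    (hc₂.continuous_vcurl_cross_sub_vcurl xT)
  have hsq : ∫ x in T, ‖vcurl c x‖ ^ 2 ≤
      2 ^ 2 * ∫ x in T, ‖vcurl (fun y => cross3 (y - xT) (vcurl c y)) x‖ ^ 2 := by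
    linarith
  calc _ ≤ Real.sqrt (2 ^ 2 * _) := Real.sqrt_le_sqrt hsq
    _ = _ := by rw [Real.sqrt_mul (by positivity), Real.sqrt_sq zero_le_two]

/-- If `T ⊂ ℝ³` is a bounded open set of diameter `h_T`, star-shaped with
respect to an interior point `x_T`, `c` is a vector-valued polynomial, and
`p := (x − x_T) × curl c`, then `‖curl c‖_{L²(T)} ≤ 2 ‖curl p‖_{L²(T)}`. -/
theorem curl_L2_bound_star_shaped (T : Set E3) (hT : ℝ) (xT : E3)
    (hopen : IsOpen T) (hbdd : Bornology.IsBounded T) (hdiam : Metric.diam T = hT)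
    (hmem : xT ∈ T) (hstar : StarConvex ℝ xT T)
    (c : E3 → E3) (q : ℕ) (hc : PolyV q c)
    (p : E3 → E3) (hp : ∀ x, p x = cross3 (x - xT) (vcurl c x)) :
    Real.sqrt (∫ x in T, ‖vcurl c x‖ ^ 2) ≤ 2 * Real.sqrt (∫ x in T, ‖vcurl p x‖ ^ 2) :=
  curl_L2_bound_star_shaped_general T xT hbdd hstar c q hc p hp
end
end

section
/- Let V be a finite-dimensional real inner product space and A : V × V → ℝ a bilinear form of the block skew-symmetric saddle-point type A((w,r),(v,q)) = a(w,v) + b(v,r) − b(w,q) + c(r,q) with a, c symmetric positive semi-definite. If for all z = (w,r), A(z,z) = ‖w‖_a² + ‖r‖_c² where ‖·‖_a = a(·,·)^{1/2}, ‖·‖_c = c(·,·)^{1/2}, and ‖(w,r)‖² := ‖w‖_a² + ‖r‖_c² is a norm on the subspace Z° := {(w,r) : −b(w,q) + c(r,q) = 0 ∀q}, then the problem A((u,p),(v,q)) = L(v) for all (v,q) (L linear) has a unique solution, and ‖(u,p)‖ ≤ sup_{‖w‖_a ≤ 1} L(w). -/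
/-!
The saddle-point form `A` is skew in its off-diagonal blocks, so `A(z, z) = a(w, w) + c(r, r)`.
If `A z` vanishes as a functional, testing it with `(0, q)` puts `z` in `Z°` and testing it with
`z` itself makes its energy vanish, so `z = 0`. An injective map from a finite-dimensional
space to its dual is bijective, which gives existence and uniqueness. Testing the equation
with the solution gives `‖(u, p)‖² = L u ≤ (sup L) ‖u‖_a ≤ (sup L) ‖(u, p)‖`.
-/

open Function

section SaddleForm

variable {R M N : Type*} [CommRing R] [AddCommGroup M] [Module R M] [AddCommGroup N] [Module R N]

def saddleForm (a : M →ₗ[R] M →ₗ[R] R) (b : M →ₗ[R] N →ₗ[R] R) (c : N →ₗ[R] N →ₗ[R] R) :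
    (M × N) →ₗ[R] (M × N) →ₗ[R] R :=
  a.compl₁₂ (.fst R M N) (.fst R M N) + (b.compl₁₂ (.fst R M N) (.snd R M N)).flip
    - b.compl₁₂ (.fst R M N) (.snd R M N) + c.compl₁₂ (.snd R M N) (.snd R M N)

variable (a : M →ₗ[R] M →ₗ[R] R) (b : M →ₗ[R] N →ₗ[R] R) (c : N →ₗ[R] N →ₗ[R] R)

@[simp]
theorem saddleForm_apply (z v : M × N) :
    saddleForm a b c z v = a z.1 v.1 + b v.1 z.2 - b z.1 v.2 + c z.2 v.2 :=
  rfl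

theorem saddleForm_apply_self (z : M × N) : saddleForm a b c z z = a z.1 z.1 + c z.2 z.2 := by
  simp

variable {a b c}

theorem saddleForm_injective
    (hnorm : ∀ (w : M) (r : N), (∀ q : N, -(b w q) + c r q = 0) →
      a w w + c r r = 0 → w = 0 ∧ r = 0) :
    Injective (saddleForm a b c) := by
  rw [← LinearMap.ker_eq_bot, LinearMap.ker_eq_bot']
  rintro ⟨w, r⟩ hz
  have hZ : ∀ q : N, -(b w q) + c r q = 0 := fun q => by
    simpa using LinearMap.congr_fun hz (0, q)
  have henergy : a w w + c r r = 0 := by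
    simpa only [saddleForm_apply_self, LinearMap.zero_apply] using LinearMap.congr_fun hz (w, r)
  obtain ⟨rfl, rfl⟩ := hnorm w r hZ henergy
  rfl

end SaddleForm

theorem LinearMap.bijective_of_injective_toDual {K V : Type*} [Field K] [AddCommGroup V]
    [Module K V] [FiniteDimensional K V] {T : V →ₗ[K] Module.Dual K V} (hT : Injective T) :
    Bijective T :=
  ⟨hT, (injective_iff_surjective_of_finrank_eq_finrank Subspace.dual_finrank_eq.symm).mp hT⟩

theorem nonpos_of_forall_mul_le {x M : ℝ} (h : ∀ t : ℝ, t * x ≤ M) : x ≤ 0 := by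
  by_contra! hx
  have := h ((M + 1) / x)
  rw [div_mul_cancel₀ _ hx.ne'] at this
  linarith

theorem LinearMap.apply_le_mul_sqrt_of_forall_le {V : Type*} [AddCommGroup V] [Module ℝ V]
    {a : V →ₗ[ℝ] V →ₗ[ℝ] ℝ} (ha_pos : ∀ w, 0 ≤ a w w) {L : V →ₗ[ℝ] ℝ} {M : ℝ}
    (hM : ∀ w, a w w ≤ 1 → L w ≤ M) (u : V) : L u ≤ M * √(a u u) := by
  rcases (ha_pos u).eq_or_lt with hzero | hpos
  · have hline : ∀ t : ℝ, t * L u ≤ M := fun t => by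
      simpa using hM (t • u) (by simp [← hzero])
    simpa [← hzero] using nonpos_of_forall_mul_le hline
  · set α := √(a u u)
    have hα : 0 < α := Real.sqrt_pos.mpr hpos
    have hunit : a (α⁻¹ • u) (α⁻¹ • u) = 1 := by
      have : α * α = a u u := Real.mul_self_sqrt hpos.le
      simp only [map_smul, LinearMap.smul_apply, smul_eq_mul, ← this]
      field_simp
    have := hM (α⁻¹ • u) hunit.le
    rw [map_smul, smul_eq_mul, inv_mul_le_iff₀ hα] at this
    linarith

theorem saddleForm_sqrt_le {X Y : Type*} [AddCommGroup X] [Module ℝ X] [AddCommGroup Y]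
    [Module ℝ Y] {a : X →ₗ[ℝ] X →ₗ[ℝ] ℝ} {b : X →ₗ[ℝ] Y →ₗ[ℝ] ℝ} {c : Y →ₗ[ℝ] Y →ₗ[ℝ] ℝ}
    (ha_pos : ∀ w, 0 ≤ a w w) (hc_pos : ∀ r, 0 ≤ c r r) {L : X →ₗ[ℝ] ℝ} {up : X × Y}
    (hup : saddleForm a b c up = L ∘ₗ LinearMap.fst ℝ X Y) {M : ℝ}
    (hM : ∀ w, a w w ≤ 1 → L w ≤ M) :
    √(a up.1 up.1 + c up.2 up.2) ≤ M := by
  have hs : a up.1 up.1 + c up.2 up.2 = L up.1 := by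
    rw [← saddleForm_apply_self, hup]
    rfl
  set s := a up.1 up.1 + c up.2 up.2
  have hM0 : 0 ≤ M := by simpa using hM 0 (by simp)
  have hsqrt : √(a up.1 up.1) ≤ √s := Real.sqrt_le_sqrt (le_add_of_nonneg_right (hc_pos _))
  have key : √s * √s ≤ M * √s :=
    calc √s * √s = L up.1 := by rw [Real.mul_self_sqrt (add_nonneg (ha_pos _) (hc_pos _))]; exact hs
      _ ≤ M * √(a up.1 up.1) := LinearMap.apply_le_mul_sqrt_of_forall_le ha_pos hM _
      _ ≤ M * √s := mul_le_mul_of_nonneg_left hsqrt hM0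
  nlinarith [Real.sqrt_nonneg s]

theorem saddle_point_wellposedness_general
    (X Y : Type*) [NormedAddCommGroup X] [InnerProductSpace ℝ X] [FiniteDimensional ℝ X]
    [NormedAddCommGroup Y] [InnerProductSpace ℝ Y] [FiniteDimensional ℝ Y]
    (a : X →ₗ[ℝ] X →ₗ[ℝ] ℝ) (b : X →ₗ[ℝ] Y →ₗ[ℝ] ℝ) (c : Y →ₗ[ℝ] Y →ₗ[ℝ] ℝ)
    (ha_pos : ∀ w, 0 ≤ a w w)
    (hc_pos : ∀ r, 0 ≤ c r r)
    (A : X × Y → X × Y → ℝ)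
    (hA : ∀ (w v : X) (r q : Y), A (w, r) (v, q) = a w v + b v r - b w q + c r q)
    (hnorm : ∀ (w : X) (r : Y), (∀ q : Y, -(b w q) + c r q = 0) →
      a w w + c r r = 0 → w = 0 ∧ r = 0)
    (L : X →ₗ[ℝ] ℝ) :
    ∃ up : X × Y,
      (∀ vq : X × Y, A up vq = L vq.1) ∧
      (∀ up' : X × Y, (∀ vq : X × Y, A up' vq = L vq.1) → up' = up) ∧
      ∀ M : ℝ, (∀ w : X, a w w ≤ 1 → L w ≤ M) →
        Real.sqrt (a up.1 up.1 + c up.2 up.2) ≤ M := by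
  have hA' : ∀ z v, A z v = saddleForm a b c z v := fun ⟨w, r⟩ ⟨v, q⟩ => hA w v r q
  have hsolves : ∀ z, (∀ vq : X × Y, A z vq = L vq.1) ↔
      saddleForm a b c z = L ∘ₗ LinearMap.fst ℝ X Y := fun z => by
    simp only [hA', LinearMap.ext_iff, LinearMap.comp_apply, LinearMap.fst_apply]
  obtain ⟨up, hup, huniq⟩ :=
    (LinearMap.bijective_of_injective_toDual (saddleForm_injective hnorm)).existsUnique
      (L ∘ₗ LinearMap.fst ℝ X Y)
  exact ⟨up, (hsolves up).mpr hup, fun up' h => huniq up' ((hsolves up').mp h),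
    fun M hM => saddleForm_sqrt_le ha_pos hc_pos hup hM⟩

/-- Abstract well-posedness of the saddle-point problem
`A((w,r),(v,q)) = a(w,v) + b(v,r) − b(w,q) + c(r,q)` on finite-dimensional real inner
product spaces, with `a`, `c` symmetric positive semi-definite, under the assumption that
`((w,r) ↦ a(w,w) + c(r,r))^{1/2}` is a norm on
`Z° := {(w,r) : −b(w,q) + c(r,q) = 0 ∀q}`: the problem `A((u,p),(v,q)) = L(v)` has a
unique solution, which satisfies `(a(u,u)+c(p,p))^{1/2} ≤ sup_{a(w,w) ≤ 1} L(w)`. -/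
theorem saddle_point_wellposedness
    (X Y : Type*) [NormedAddCommGroup X] [InnerProductSpace ℝ X] [FiniteDimensional ℝ X]
    [NormedAddCommGroup Y] [InnerProductSpace ℝ Y] [FiniteDimensional ℝ Y]
    (a : X →ₗ[ℝ] X →ₗ[ℝ] ℝ) (b : X →ₗ[ℝ] Y →ₗ[ℝ] ℝ) (c : Y →ₗ[ℝ] Y →ₗ[ℝ] ℝ)
    (ha_symm : ∀ w v, a w v = a v w) (ha_pos : ∀ w, 0 ≤ a w w)
    (hc_symm : ∀ r q, c r q = c q r) (hc_pos : ∀ r, 0 ≤ c r r)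
    (A : X × Y → X × Y → ℝ)
    (hA : ∀ (w v : X) (r q : Y), A (w, r) (v, q) = a w v + b v r - b w q + c r q)
    (hcoer : ∀ z : X × Y, A z z = a z.1 z.1 + c z.2 z.2)
    (hnorm : ∀ (w : X) (r : Y), (∀ q : Y, -(b w q) + c r q = 0) →
      a w w + c r r = 0 → w = 0 ∧ r = 0)
    (L : X →ₗ[ℝ] ℝ) :
    ∃ up : X × Y,
      (∀ vq : X × Y, A up vq = L vq.1) ∧
      (∀ up' : X × Y, (∀ vq : X × Y, A up' vq = L vq.1) → up' = up) ∧
      ∀ M : ℝ, (∀ w : X, a w w ≤ 1 → L w ≤ M) →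
        Real.sqrt (a up.1 up.1 + c up.2 up.2) ≤ M :=
  saddle_point_wellposedness_general X Y a b c ha_pos hc_pos A hA hnorm L
end
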